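/- arXiv:1406.6298 — 7 statements merged into one kernel-verified Lean document; each statement's English description precedes it below -/
import Mathlib

section
/- Let G be a simple graph that contains no induced subgraph isomorphic to the diamond and no induced subgraph isomorphic to 2P_2 + P_4 (the disjoint union of two edges and a path on four vertices). Suppose V(G) is partitioned into cliques Z_1, ..., Z_k with k ≥ 4 and |Z_i| ≥ 8 for all i, such that for every ordered pair (i,j) with i ≠ j, every vertex of Z_i has at most one neighbour in Z_j. Then G is a disjoint union of cliques, i.e., no two vertices in different cliques Z_i, Z_j are adjacent. -/
/-- `G` contains an induced copy of `H`. -/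
def HasInducedCopy {α β : Type*} (H : SimpleGraph α) (G : SimpleGraph β) : Prop :=
  ∃ f : α ↪ β, ∀ a b : α, G.Adj (f a) (f b) ↔ H.Adj a b

/-- The diamond: `K₄` minus the edge `{0,1}`. -/
def diamond : SimpleGraph (Fin 4) :=
  SimpleGraph.fromRel (fun a b => ¬(a = 0 ∧ b = 1) ∧ ¬(a = 1 ∧ b = 0))

/-- `2P₂ + P₄`: two disjoint edges `{0,1}`, `{2,3}` and a path `4-5-6-7`. -/
def twoP2PlusP4 : SimpleGraph (Fin 8) :=
  SimpleGraph.fromRel (fun a b =>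
    (a = 0 ∧ b = 1) ∨ (a = 2 ∧ b = 3) ∨ (a = 4 ∧ b = 5) ∨ (a = 5 ∧ b = 6) ∨ (a = 6 ∧ b = 7))

set_option maxHeartbeats 1600000

lemma induced_copy_aux {V : Type*} (G : SimpleGraph V) (v0 v1 v2 v3 v4 v5 v6 v7 : V)
    (hadj01 : G.Adj v0 v1)
    (hne02 : v0 ≠ v2) (hnadj02 : ¬ G.Adj v0 v2)
    (hne03 : v0 ≠ v3) (hnadj03 : ¬ G.Adj v0 v3)
    (hne04 : v0 ≠ v4) (hnadj04 : ¬ G.Adj v0 v4)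
    (hne05 : v0 ≠ v5) (hnadj05 : ¬ G.Adj v0 v5)
    (hne06 : v0 ≠ v6) (hnadj06 : ¬ G.Adj v0 v6)
    (hne07 : v0 ≠ v7) (hnadj07 : ¬ G.Adj v0 v7)
    (hne12 : v1 ≠ v2) (hnadj12 : ¬ G.Adj v1 v2)
    (hne13 : v1 ≠ v3) (hnadj13 : ¬ G.Adj v1 v3)
    (hne14 : v1 ≠ v4) (hnadj14 : ¬ G.Adj v1 v4)
    (hne15 : v1 ≠ v5) (hnadj15 : ¬ G.Adj v1 v5)
    (hne16 : v1 ≠ v6) (hnadj16 : ¬ G.Adj v1 v6)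
    (hne17 : v1 ≠ v7) (hnadj17 : ¬ G.Adj v1 v7)
    (hadj23 : G.Adj v2 v3)
    (hne24 : v2 ≠ v4) (hnadj24 : ¬ G.Adj v2 v4)
    (hne25 : v2 ≠ v5) (hnadj25 : ¬ G.Adj v2 v5)
    (hne26 : v2 ≠ v6) (hnadj26 : ¬ G.Adj v2 v6)
    (hne27 : v2 ≠ v7) (hnadj27 : ¬ G.Adj v2 v7)
    (hne34 : v3 ≠ v4) (hnadj34 : ¬ G.Adj v3 v4)
    (hne35 : v3 ≠ v5) (hnadj35 : ¬ G.Adj v3 v5)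
    (hne36 : v3 ≠ v6) (hnadj36 : ¬ G.Adj v3 v6)
    (hne37 : v3 ≠ v7) (hnadj37 : ¬ G.Adj v3 v7)
    (hadj45 : G.Adj v4 v5)
    (hne46 : v4 ≠ v6) (hnadj46 : ¬ G.Adj v4 v6)
    (hne47 : v4 ≠ v7) (hnadj47 : ¬ G.Adj v4 v7)
    (hadj56 : G.Adj v5 v6)
    (hne57 : v5 ≠ v7) (hnadj57 : ¬ G.Adj v5 v7)
    (hadj67 : G.Adj v6 v7) :
    HasInducedCopy twoP2PlusP4 G := by
  have hne01 := G.ne_of_adj hadj01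
  have hne23 := G.ne_of_adj hadj23
  have hne45 := G.ne_of_adj hadj45
  have hne56 := G.ne_of_adj hadj56
  have hne67 := G.ne_of_adj hadj67
  refine ⟨⟨![v0,v1,v2,v3,v4,v5,v6,v7], ?_⟩, ?_⟩
  · intro x y h
    fin_cases x <;> fin_cases y
    · rfl
    · exact absurd h hne01
    · exact absurd h hne02
    · exact absurd h hne03
    · exact absurd h hne04
    · exact absurd h hne05
    · exact absurd h hne06
    · exact absurd h hne07
    · exact absurd h.symm hne01
    · rfl
    · exact absurd h hne12
    · exact absurd h hne13
    · exact absurd h hne14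
    · exact absurd h hne15
    · exact absurd h hne16
    · exact absurd h hne17
    · exact absurd h.symm hne02
    · exact absurd h.symm hne12
    · rfl
    · exact absurd h hne23
    · exact absurd h hne24
    · exact absurd h hne25
    · exact absurd h hne26
    · exact absurd h hne27
    · exact absurd h.symm hne03
    · exact absurd h.symm hne13
    · exact absurd h.symm hne23
    · rfl
    · exact absurd h hne34
    · exact absurd h hne35
    · exact absurd h hne36
    · exact absurd h hne37
    · exact absurd h.symm hne04
    · exact absurd h.symm hne14
    · exact absurd h.symm hne24
    · exact absurd h.symm hne34
    · rfl
    · exact absurd h hne45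
    · exact absurd h hne46
    · exact absurd h hne47
    · exact absurd h.symm hne05
    · exact absurd h.symm hne15
    · exact absurd h.symm hne25
    · exact absurd h.symm hne35
    · exact absurd h.symm hne45
    · rfl
    · exact absurd h hne56
    · exact absurd h hne57
    · exact absurd h.symm hne06
    · exact absurd h.symm hne16
    · exact absurd h.symm hne26
    · exact absurd h.symm hne36
    · exact absurd h.symm hne46
    · exact absurd h.symm hne56
    · rfl
    · exact absurd h hne67
    · exact absurd h.symm hne07
    · exact absurd h.symm hne17
    · exact absurd h.symm hne27
    · exact absurd h.symm hne37
    · exact absurd h.symm hne47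
    · exact absurd h.symm hne57
    · exact absurd h.symm hne67
    · rfl
  · intro a b
    fin_cases a <;> fin_cases b
    · exact iff_of_false (G.loopless.irrefl _) (by simp [twoP2PlusP4, SimpleGraph.fromRel_adj])
    · exact iff_of_true hadj01 (by simp [twoP2PlusP4, SimpleGraph.fromRel_adj])
    · exact iff_of_false hnadj02 (by simp [twoP2PlusP4, SimpleGraph.fromRel_adj])
    · exact iff_of_false hnadj03 (by simp [twoP2PlusP4, SimpleGraph.fromRel_adj])
    · exact iff_of_false hnadj04 (by simp [twoP2PlusP4, SimpleGraph.fromRel_adj])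
    · exact iff_of_false hnadj05 (by simp [twoP2PlusP4, SimpleGraph.fromRel_adj])
    · exact iff_of_false hnadj06 (by simp [twoP2PlusP4, SimpleGraph.fromRel_adj])
    · exact iff_of_false hnadj07 (by simp [twoP2PlusP4, SimpleGraph.fromRel_adj])
    · exact iff_of_true hadj01.symm (by simp [twoP2PlusP4, SimpleGraph.fromRel_adj])
    · exact iff_of_false (G.loopless.irrefl _) (by simp [twoP2PlusP4, SimpleGraph.fromRel_adj])
    · exact iff_of_false hnadj12 (by simp [twoP2PlusP4, SimpleGraph.fromRel_adj])
    · exact iff_of_false hnadj13 (by simp [twoP2PlusP4, SimpleGraph.fromRel_adj])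
    · exact iff_of_false hnadj14 (by simp [twoP2PlusP4, SimpleGraph.fromRel_adj])
    · exact iff_of_false hnadj15 (by simp [twoP2PlusP4, SimpleGraph.fromRel_adj])
    · exact iff_of_false hnadj16 (by simp [twoP2PlusP4, SimpleGraph.fromRel_adj])
    · exact iff_of_false hnadj17 (by simp [twoP2PlusP4, SimpleGraph.fromRel_adj])
    · exact iff_of_false (fun h => hnadj02 h.symm) (by simp [twoP2PlusP4, SimpleGraph.fromRel_adj])
    · exact iff_of_false (fun h => hnadj12 h.symm) (by simp [twoP2PlusP4, SimpleGraph.fromRel_adj])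
    · exact iff_of_false (G.loopless.irrefl _) (by simp [twoP2PlusP4, SimpleGraph.fromRel_adj])
    · exact iff_of_true hadj23 (by simp [twoP2PlusP4, SimpleGraph.fromRel_adj])
    · exact iff_of_false hnadj24 (by simp [twoP2PlusP4, SimpleGraph.fromRel_adj])
    · exact iff_of_false hnadj25 (by simp [twoP2PlusP4, SimpleGraph.fromRel_adj])
    · exact iff_of_false hnadj26 (by simp [twoP2PlusP4, SimpleGraph.fromRel_adj])
    · exact iff_of_false hnadj27 (by simp [twoP2PlusP4, SimpleGraph.fromRel_adj])
    · exact iff_of_false (fun h => hnadj03 h.symm) (by simp [twoP2PlusP4, SimpleGraph.fromRel_adj])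
    · exact iff_of_false (fun h => hnadj13 h.symm) (by simp [twoP2PlusP4, SimpleGraph.fromRel_adj])
    · exact iff_of_true hadj23.symm (by simp [twoP2PlusP4, SimpleGraph.fromRel_adj])
    · exact iff_of_false (G.loopless.irrefl _) (by simp [twoP2PlusP4, SimpleGraph.fromRel_adj])
    · exact iff_of_false hnadj34 (by simp [twoP2PlusP4, SimpleGraph.fromRel_adj])
    · exact iff_of_false hnadj35 (by simp [twoP2PlusP4, SimpleGraph.fromRel_adj])
    · exact iff_of_false hnadj36 (by simp [twoP2PlusP4, SimpleGraph.fromRel_adj])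
    · exact iff_of_false hnadj37 (by simp [twoP2PlusP4, SimpleGraph.fromRel_adj])
    · exact iff_of_false (fun h => hnadj04 h.symm) (by simp [twoP2PlusP4, SimpleGraph.fromRel_adj])
    · exact iff_of_false (fun h => hnadj14 h.symm) (by simp [twoP2PlusP4, SimpleGraph.fromRel_adj])
    · exact iff_of_false (fun h => hnadj24 h.symm) (by simp [twoP2PlusP4, SimpleGraph.fromRel_adj])
    · exact iff_of_false (fun h => hnadj34 h.symm) (by simp [twoP2PlusP4, SimpleGraph.fromRel_adj])
    · exact iff_of_false (G.loopless.irrefl _) (by simp [twoP2PlusP4, SimpleGraph.fromRel_adj])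
    · exact iff_of_true hadj45 (by simp [twoP2PlusP4, SimpleGraph.fromRel_adj])
    · exact iff_of_false hnadj46 (by simp [twoP2PlusP4, SimpleGraph.fromRel_adj])
    · exact iff_of_false hnadj47 (by simp [twoP2PlusP4, SimpleGraph.fromRel_adj])
    · exact iff_of_false (fun h => hnadj05 h.symm) (by simp [twoP2PlusP4, SimpleGraph.fromRel_adj])
    · exact iff_of_false (fun h => hnadj15 h.symm) (by simp [twoP2PlusP4, SimpleGraph.fromRel_adj])
    · exact iff_of_false (fun h => hnadj25 h.symm) (by simp [twoP2PlusP4, SimpleGraph.fromRel_adj])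
    · exact iff_of_false (fun h => hnadj35 h.symm) (by simp [twoP2PlusP4, SimpleGraph.fromRel_adj])
    · exact iff_of_true hadj45.symm (by simp [twoP2PlusP4, SimpleGraph.fromRel_adj])
    · exact iff_of_false (G.loopless.irrefl _) (by simp [twoP2PlusP4, SimpleGraph.fromRel_adj])
    · exact iff_of_true hadj56 (by simp [twoP2PlusP4, SimpleGraph.fromRel_adj])
    · exact iff_of_false hnadj57 (by simp [twoP2PlusP4, SimpleGraph.fromRel_adj])
    · exact iff_of_false (fun h => hnadj06 h.symm) (by simp [twoP2PlusP4, SimpleGraph.fromRel_adj])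
    · exact iff_of_false (fun h => hnadj16 h.symm) (by simp [twoP2PlusP4, SimpleGraph.fromRel_adj])
    · exact iff_of_false (fun h => hnadj26 h.symm) (by simp [twoP2PlusP4, SimpleGraph.fromRel_adj])
    · exact iff_of_false (fun h => hnadj36 h.symm) (by simp [twoP2PlusP4, SimpleGraph.fromRel_adj])
    · exact iff_of_false (fun h => hnadj46 h.symm) (by simp [twoP2PlusP4, SimpleGraph.fromRel_adj])
    · exact iff_of_true hadj56.symm (by simp [twoP2PlusP4, SimpleGraph.fromRel_adj])
    · exact iff_of_false (G.loopless.irrefl _) (by simp [twoP2PlusP4, SimpleGraph.fromRel_adj])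
    · exact iff_of_true hadj67 (by simp [twoP2PlusP4, SimpleGraph.fromRel_adj])
    · exact iff_of_false (fun h => hnadj07 h.symm) (by simp [twoP2PlusP4, SimpleGraph.fromRel_adj])
    · exact iff_of_false (fun h => hnadj17 h.symm) (by simp [twoP2PlusP4, SimpleGraph.fromRel_adj])
    · exact iff_of_false (fun h => hnadj27 h.symm) (by simp [twoP2PlusP4, SimpleGraph.fromRel_adj])
    · exact iff_of_false (fun h => hnadj37 h.symm) (by simp [twoP2PlusP4, SimpleGraph.fromRel_adj])
    · exact iff_of_false (fun h => hnadj47 h.symm) (by simp [twoP2PlusP4, SimpleGraph.fromRel_adj])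
    · exact iff_of_false (fun h => hnadj57 h.symm) (by simp [twoP2PlusP4, SimpleGraph.fromRel_adj])
    · exact iff_of_true hadj67.symm (by simp [twoP2PlusP4, SimpleGraph.fromRel_adj])
    · exact iff_of_false (G.loopless.irrefl _) (by simp [twoP2PlusP4, SimpleGraph.fromRel_adj])

theorem stmt1 {V : Type*} [Fintype V] [DecidableEq V] (G : SimpleGraph V)
    (hdiamond : ¬ HasInducedCopy diamond G)
    (h2p2p4 : ¬ HasInducedCopy twoP2PlusP4 G)
    (k : ℕ) (hk : 4 ≤ k) (Z : Fin k → Finset V)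
    (hcover : ∀ v : V, ∃ i, v ∈ Z i)
    (hdisj : ∀ i j : Fin k, i ≠ j → Disjoint (Z i) (Z j))
    (hclique : ∀ i, G.IsClique (Z i : Set V))
    (hcard : ∀ i, 8 ≤ (Z i).card)
    (hmatch : ∀ i j : Fin k, i ≠ j → ∀ u ∈ Z i, ∀ v ∈ Z j, ∀ w ∈ Z j,
      G.Adj u v → G.Adj u w → v = w) :
    ∀ i j : Fin k, i ≠ j → ∀ u ∈ Z i, ∀ v ∈ Z j, ¬ G.Adj u v := by
  classical
  intro i j hij u hu v hv hadj
  apply h2p2p4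
  -- clique adjacency helper
  have hcl : ∀ p : Fin k, ∀ x ∈ Z p, ∀ y ∈ Z p, x ≠ y → G.Adj x y :=
    fun p x hx y hy hxy => hclique p hx hy hxy
  -- cross-clique distinctness
  have hdne : ∀ {p q : Fin k} {x y : V}, p ≠ q → x ∈ Z p → y ∈ Z q → x ≠ y :=
    fun h hx hy e => Finset.disjoint_left.mp (hdisj _ _ h) hx (e ▸ hy)
  -- neighbour count bound
  have hnb : ∀ (p q : Fin k), p ≠ q → ∀ x ∈ Z p,
      ((Z q).filter (fun y => G.Adj x y)).card ≤ 1 := by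
    intro p q hpq x hx
    refine Finset.card_le_one.mpr ?_
    intro y hy z hz
    simp only [Finset.mem_filter] at hy hz
    exact hmatch p q hpq x hx y hy.1 z hz.1 hy.2 hz.2
  -- picking two good elements
  have pick2 : ∀ (s bad : Finset V), bad.card + 2 ≤ s.card →
      ∃ a ∈ s, ∃ b ∈ s, a ≠ b ∧ a ∉ bad ∧ b ∉ bad := by
    intro s bad h
    have h1 := Finset.le_card_sdiff bad s
    have h3 : 1 < (s \ bad).card := by omega
    obtain ⟨a, ha, b, hb, hab⟩ := Finset.one_lt_card.mp h3
    simp only [Finset.mem_sdiff] at ha hb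
    exact ⟨a, ha.1, b, hb.1, hab, ha.2, hb.2⟩
  -- pick u₂
  obtain ⟨u₂, hu₂, _, _, _, hu₂u', _⟩ := pick2 (Z i) {u} (by
    have := hcard i; simp only [Finset.card_singleton]; omega)
  have hu₂u : u₂ ≠ u := by simpa using hu₂u'
  have hu₂v : ¬ G.Adj u₂ v :=
    fun h => hu₂u (hmatch j i hij.symm v hv u₂ hu₂ u hu h.symm hadj.symm)
  have huu₂ : G.Adj u₂ u := hcl i u₂ hu₂ u hu hu₂u
  -- pick v₂
  obtain ⟨v₂, hv₂, _, _, _, hv₂bad, _⟩ := pick2 (Z j)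
    (insert v ((Z j).filter (fun y => G.Adj u₂ y))) (by
      have h1 := hnb i j hij u₂ hu₂
      have h2 := Finset.card_insert_le v ((Z j).filter (fun y => G.Adj u₂ y))
      have := hcard j; omega)
  simp only [Finset.mem_insert, Finset.mem_filter, not_or, not_and] at hv₂bad
  have hv₂v : v₂ ≠ v := hv₂bad.1
  have hu₂v₂ : ¬ G.Adj u₂ v₂ := hv₂bad.2 hv₂
  have huv₂ : ¬ G.Adj u v₂ := fun h => hv₂v (hmatch i j hij u hu v₂ hv₂ v hv h hadj)
  have hvv₂ : G.Adj v v₂ := hcl j v hv v₂ hv₂ hv₂v.symm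
  -- pick two other cliques p q
  obtain ⟨p, hp, q, hq, hpq⟩ : ∃ p ∈ (Finset.univ \ {i, j} : Finset (Fin k)),
      ∃ q ∈ (Finset.univ \ {i, j} : Finset (Fin k)), p ≠ q := by
    refine Finset.one_lt_card.mp ?_
    have h1 : ({i, j} : Finset (Fin k)).card ≤ 2 := Finset.card_le_two ..
    have h2 := Finset.le_card_sdiff ({i, j} : Finset (Fin k)) Finset.univ
    have h3 : (Finset.univ : Finset (Fin k)).card = k := by simp
    omega
  simp only [Finset.mem_sdiff, Finset.mem_insert, Finset.mem_singleton, not_or] at hp hq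
  have hpi : p ≠ i := hp.2.1
  have hpj : p ≠ j := hp.2.2
  have hqi : q ≠ i := hq.2.1
  have hqj : q ≠ j := hq.2.2
  -- pick a b in Z p
  have hbadp : ((Z p).filter (fun y => G.Adj u y ∨ G.Adj u₂ y ∨ G.Adj v y ∨ G.Adj v₂ y)).card ≤ 4 := by
    have hsub : (Z p).filter (fun y => G.Adj u y ∨ G.Adj u₂ y ∨ G.Adj v y ∨ G.Adj v₂ y) ⊆
        ((Z p).filter (fun y => G.Adj u y)) ∪ ((Z p).filter (fun y => G.Adj u₂ y)) ∪
        ((Z p).filter (fun y => G.Adj v y)) ∪ ((Z p).filter (fun y => G.Adj v₂ y)) := by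
      intro x hx
      simp only [Finset.mem_filter, Finset.mem_union] at hx ⊢
      tauto
    have h1 := hnb i p hpi.symm u hu
    have h2 := hnb i p hpi.symm u₂ hu₂
    have h3 := hnb j p hpj.symm v hv
    have h4 := hnb j p hpj.symm v₂ hv₂
    have := Finset.card_le_card hsub
    have hu1 := Finset.card_union_le (((Z p).filter (fun y => G.Adj u y)) ∪ ((Z p).filter (fun y => G.Adj u₂ y)) ∪ ((Z p).filter (fun y => G.Adj v y))) ((Z p).filter (fun y => G.Adj v₂ y))
    have hu2 := Finset.card_union_le (((Z p).filter (fun y => G.Adj u y)) ∪ ((Z p).filter (fun y => G.Adj u₂ y))) ((Z p).filter (fun y => G.Adj v y))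
    have hu3 := Finset.card_union_le ((Z p).filter (fun y => G.Adj u y)) ((Z p).filter (fun y => G.Adj u₂ y))
    omega
  obtain ⟨a, ha, b, hb, hab, hanb, hbnb⟩ := pick2 (Z p)
    ((Z p).filter (fun y => G.Adj u y ∨ G.Adj u₂ y ∨ G.Adj v y ∨ G.Adj v₂ y)) (by
      have := hcard p; omega)
  simp only [Finset.mem_filter, not_and, not_or] at hanb hbnb
  obtain ⟨hau, hau₂, hav, hav₂⟩ := hanb ha
  obtain ⟨hbu, hbu₂, hbv, hbv₂⟩ := hbnb hb
  have hadjab : G.Adj a b := hcl p a ha b hb hab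
  -- pick c d in Z q
  have hbadq : ((Z q).filter (fun y => G.Adj u y ∨ G.Adj u₂ y ∨ G.Adj v y ∨ G.Adj v₂ y ∨ G.Adj a y ∨ G.Adj b y)).card ≤ 6 := by
    have hsub : (Z q).filter (fun y => G.Adj u y ∨ G.Adj u₂ y ∨ G.Adj v y ∨ G.Adj v₂ y ∨ G.Adj a y ∨ G.Adj b y) ⊆
        ((Z q).filter (fun y => G.Adj u y)) ∪ ((Z q).filter (fun y => G.Adj u₂ y)) ∪
        ((Z q).filter (fun y => G.Adj v y)) ∪ ((Z q).filter (fun y => G.Adj v₂ y)) ∪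
        ((Z q).filter (fun y => G.Adj a y)) ∪ ((Z q).filter (fun y => G.Adj b y)) := by
      intro x hx
      simp only [Finset.mem_filter, Finset.mem_union] at hx ⊢
      tauto
    have h1 := hnb i q hqi.symm u hu
    have h2 := hnb i q hqi.symm u₂ hu₂
    have h3 := hnb j q hqj.symm v hv
    have h4 := hnb j q hqj.symm v₂ hv₂
    have h5 := hnb p q hpq a ha
    have h6 := hnb p q hpq b hb
    have := Finset.card_le_card hsub
    have hu1 := Finset.card_union_le (((Z q).filter (fun y => G.Adj u y)) ∪ ((Z q).filter (fun y => G.Adj u₂ y)) ∪ ((Z q).filter (fun y => G.Adj v y)) ∪ ((Z q).filter (fun y => G.Adj v₂ y)) ∪ ((Z q).filter (fun y => G.Adj a y))) ((Z q).filter (fun y => G.Adj b y))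
    have hu2 := Finset.card_union_le (((Z q).filter (fun y => G.Adj u y)) ∪ ((Z q).filter (fun y => G.Adj u₂ y)) ∪ ((Z q).filter (fun y => G.Adj v y)) ∪ ((Z q).filter (fun y => G.Adj v₂ y))) ((Z q).filter (fun y => G.Adj a y))
    have hu3 := Finset.card_union_le (((Z q).filter (fun y => G.Adj u y)) ∪ ((Z q).filter (fun y => G.Adj u₂ y)) ∪ ((Z q).filter (fun y => G.Adj v y))) ((Z q).filter (fun y => G.Adj v₂ y))
    have hu4 := Finset.card_union_le (((Z q).filter (fun y => G.Adj u y)) ∪ ((Z q).filter (fun y => G.Adj u₂ y))) ((Z q).filter (fun y => G.Adj v y))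
    have hu5 := Finset.card_union_le ((Z q).filter (fun y => G.Adj u y)) ((Z q).filter (fun y => G.Adj u₂ y))
    omega
  obtain ⟨c, hc, d, hd, hcd, hcnb, hdnb⟩ := pick2 (Z q)
    ((Z q).filter (fun y => G.Adj u y ∨ G.Adj u₂ y ∨ G.Adj v y ∨ G.Adj v₂ y ∨ G.Adj a y ∨ G.Adj b y)) (by
      have := hcard q; omega)
  simp only [Finset.mem_filter, not_and, not_or] at hcnb hdnb
  obtain ⟨hcu, hcu₂, hcv, hcv₂, hca, hcb⟩ := hcnb hc
  obtain ⟨hdu, hdu₂, hdv, hdv₂, hda, hdb⟩ := hdnb hd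
  have hadjcd : G.Adj c d := hcl q c hc d hd hcd
  -- assemble: v0=a v1=b v2=c v3=d v4=u₂ v5=u v6=v v7=v₂
  exact induced_copy_aux G a b c d u₂ u v v₂
    hadjab
    (hdne hpq ha hc) hca
    (hdne hpq ha hd) hda
    (hdne hpi ha hu₂) (fun h => hau₂ h.symm)
    (hdne hpi ha hu) (fun h => hau h.symm)
    (hdne hpj ha hv) (fun h => hav h.symm)
    (hdne hpj ha hv₂) (fun h => hav₂ h.symm)
    (hdne hpq hb hc) hcb
    (hdne hpq hb hd) hdb
    (hdne hpi hb hu₂) (fun h => hbu₂ h.symm)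
    (hdne hpi hb hu) (fun h => hbu h.symm)
    (hdne hpj hb hv) (fun h => hbv h.symm)
    (hdne hpj hb hv₂) (fun h => hbv₂ h.symm)
    hadjcd
    (hdne hqi hc hu₂) (fun h => hcu₂ h.symm)
    (hdne hqi hc hu) (fun h => hcu h.symm)
    (hdne hqj hc hv) (fun h => hcv h.symm)
    (hdne hqj hc hv₂) (fun h => hcv₂ h.symm)
    (hdne hqi hd hu₂) (fun h => hdu₂ h.symm)
    (hdne hqi hd hu) (fun h => hdu h.symm)
    (hdne hqj hd hv) (fun h => hdv h.symm)
    (hdne hqj hd hv₂) (fun h => hdv₂ h.symm)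
    huu₂
    (hdne hij hu₂ hv) hu₂v
    (hdne hij hu₂ hv₂) hu₂v₂
    hadj
    (hdne hij hu hv₂) huv₂
    hvv₂
end

section
/- Let G be a simple graph with no induced subgraph isomorphic to the diamond and no induced subgraph isomorphic to 3P_1 + P_2 (three isolated vertices plus one edge). Suppose G contains an induced cycle C on five vertices v_1, v_2, v_3, v_4, v_5 (in cyclic order). Then the set X of vertices outside C that are adjacent to both v_1 and v_3 is an independent set in G. -/
/-- `3P₁ + P₂`: three isolated vertices and the single edge `{3,4}`. -/
def threeP1PlusP2 : SimpleGraph (Fin 5) :=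
  SimpleGraph.fromRel (fun a b => a = 3 ∧ b = 4)

theorem stmt3 {V : Type*} [Fintype V] (G : SimpleGraph V)
    (hdiamond : ¬ HasInducedCopy diamond G)
    (h3p1p2 : ¬ HasInducedCopy threeP1PlusP2 G)
    (v : Fin 5 → V) (hinj : Function.Injective v)
    (hcyc : ∀ i j : Fin 5, G.Adj (v i) (v j) ↔ (j = i + 1 ∨ i = j + 1)) :
    ∀ x y : V, x ∉ Set.range v → y ∉ Set.range v →
      G.Adj x (v 0) → G.Adj x (v 2) → G.Adj y (v 0) → G.Adj y (v 2) →
      x ≠ y → ¬ G.Adj x y := by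
  intro x y hx hy hx0 hx2 hy0 hy2 hxy hadj
  have h02 : ¬ G.Adj (v 0) (v 2) := by
    rw [hcyc]; decide
  have h20 : ¬ G.Adj (v 2) (v 0) := fun h => h02 h.symm
  have hxv : ∀ i, x ≠ v i := fun i h => hx ⟨i, h.symm⟩
  have hyv : ∀ i, y ≠ v i := fun i h => hy ⟨i, h.symm⟩
  apply hdiamond
  have hfinj : Function.Injective ![v 0, v 2, x, y] := by
    intro a b hab
    fin_cases a <;> fin_cases b <;> simp_all [hinj.ne (show (0:Fin 5) ≠ 2 by decide),
      (hxv 0).symm, (hxv 2).symm, (hyv 0).symm, (hyv 2).symm, hxv, hyv, hxy, hxy.symm] <;>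
    first
      | rfl
      | (exact absurd hab (hinj.ne (by decide)))
      | (exact absurd hab.symm (hinj.ne (by decide)))
  refine ⟨⟨![v 0, v 2, x, y], hfinj⟩, ?_⟩
  intro a b
  fin_cases a <;> fin_cases b <;>
    simp [diamond, SimpleGraph.fromRel_adj, h02, h20,
      hx0, hx2, hy0, hy2, hadj, G.adj_symm hx0, G.adj_symm hx2, G.adj_symm hy0, G.adj_symm hy2,
      G.adj_symm hadj, hxv, hyv, (hxv 0).symm, (hxv 2).symm, (hyv 0).symm, (hyv 2).symm,
      hxy, hxy.symm, hinj.ne (show (0:Fin 5) ≠ 2 by decide)]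
end

section
/- Let G be a simple graph with no induced subgraph isomorphic to 3P_1 + P_2. Suppose G contains an induced cycle on five vertices v_1, ..., v_5 in cyclic order. Then the set of vertices outside the cycle with no neighbour on the cycle is a clique. -/
theorem stmt4 {V : Type*} [Fintype V] (G : SimpleGraph V)
    (h3p1p2 : ¬ HasInducedCopy threeP1PlusP2 G)
    (v : Fin 5 → V) (hinj : Function.Injective v)
    (hcyc : ∀ i j : Fin 5, G.Adj (v i) (v j) ↔ (j = i + 1 ∨ i = j + 1)) :
    ∀ x y : V, x ∉ Set.range v → y ∉ Set.range v →
      (∀ i : Fin 5, ¬ G.Adj x (v i)) → (∀ i : Fin 5, ¬ G.Adj y (v i)) →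
      x ≠ y → G.Adj x y := by
  intro x y hx hy hnx hny hne
  by_contra hxy
  apply h3p1p2
  have hvx : ∀ i, v i ≠ x := fun i h => hx ⟨i, h⟩
  have hvy : ∀ i, v i ≠ y := fun i h => hy ⟨i, h⟩
  have hxy' : ¬ G.Adj y x := fun h => hxy h.symm
  have hnx' : ∀ i, ¬ G.Adj (v i) x := fun i h => hnx i h.symm
  have hny' : ∀ i, ¬ G.Adj (v i) y := fun i h => hny i h.symm
  refine ⟨⟨![x, y, v 4, v 1, v 2], ?_⟩, ?_⟩
  · intro a b hab
    fin_cases a <;> fin_cases b <;>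
      simp_all [hinj.eq_iff]
  · intro a b
    fin_cases a <;> fin_cases b <;>
      dsimp only [DFunLike.coe] <;> simp [threeP1PlusP2, hcyc, hxy, hxy', hnx, hny, hnx', hny']
end

section
/- Let H be a simple bipartite graph with bipartition classes A and C, each an independent set, and let G' be obtained from H as follows: subdivide every edge of H exactly once (the new vertices form a set B), then make A complete to C. Then G' contains no induced subgraph isomorphic to the diamond (K_4 minus an edge). -/
/-- The graph `G'` obtained from a bipartite graph with classes `A`, `C` by subdividing every
edge once (the new vertices forming `B`) and making `A` complete to `C`. -/
theorem stmt14 {V : Type*} [Fintype V] (G' : SimpleGraph V) (A B C : Set V)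
    (hpart : ∀ x : V, (x ∈ A ∧ x ∉ B ∧ x ∉ C) ∨ (x ∈ B ∧ x ∉ A ∧ x ∉ C) ∨
      (x ∈ C ∧ x ∉ A ∧ x ∉ B))
    (hA : ∀ a ∈ A, ∀ a' ∈ A, ¬ G'.Adj a a')
    (hB : ∀ b ∈ B, ∀ b' ∈ B, ¬ G'.Adj b b')
    (hC : ∀ c ∈ C, ∀ c' ∈ C, ¬ G'.Adj c c')
    (hAC : ∀ a ∈ A, ∀ c ∈ C, G'.Adj a c)
    (hBA : ∀ b ∈ B, ∃! a, a ∈ A ∧ G'.Adj b a)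
    (hBC : ∀ b ∈ B, ∃! c, c ∈ C ∧ G'.Adj b c)
    (hnbhd : ∀ b ∈ B, ∀ b' ∈ B, (∀ x : V, G'.Adj b x ↔ G'.Adj b' x) → b = b') :
    ¬ HasInducedCopy diamond G' := by
  -- key lemma: two B-vertices with a common A-neighbour and a common C-neighbour are equal
  have key : ∀ b ∈ B, ∀ b' ∈ B, ∀ a ∈ A, ∀ c ∈ C,
      G'.Adj b a → G'.Adj b c → G'.Adj b' a → G'.Adj b' c → b = b' := by
    intro b hb b' hb' a ha c hc hba hbc hb'a hb'c
    apply hnbhd b hb b' hb'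
    have aux : ∀ y ∈ B, G'.Adj y a → G'.Adj y c → ∀ x, G'.Adj y x → x = a ∨ x = c := by
      intro y hy hya hyc x hx
      rcases hpart x with ⟨hxA, -, -⟩ | ⟨hxB, -, -⟩ | ⟨hxC, -, -⟩
      · obtain ⟨a0, -, hu⟩ := hBA y hy
        exact Or.inl ((hu x ⟨hxA, hx⟩).trans (hu a ⟨ha, hya⟩).symm)
      · exact absurd hx (hB y hy x hxB)
      · obtain ⟨c0, -, hu⟩ := hBC y hy
        exact Or.inr ((hu x ⟨hxC, hx⟩).trans (hu c ⟨hc, hyc⟩).symm)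
    intro x
    constructor
    · intro hx
      rcases aux b hb hba hbc x hx with rfl | rfl
      · exact hb'a
      · exact hb'c
    · intro hx
      rcases aux b' hb' hb'a hb'c x hx with rfl | rfl
      · exact hba
      · exact hbc
  rintro ⟨f, hf⟩
  have ha02 : G'.Adj (f 0) (f 2) := (hf 0 2).2 (by simp [diamond, SimpleGraph.fromRel_adj])
  have ha03 : G'.Adj (f 0) (f 3) := (hf 0 3).2 (by simp [diamond, SimpleGraph.fromRel_adj])
  have ha12 : G'.Adj (f 1) (f 2) := (hf 1 2).2 (by simp [diamond, SimpleGraph.fromRel_adj])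
  have ha13 : G'.Adj (f 1) (f 3) := (hf 1 3).2 (by simp [diamond, SimpleGraph.fromRel_adj])
  have ha23 : G'.Adj (f 2) (f 3) := (hf 2 3).2 (by simp [diamond, SimpleGraph.fromRel_adj])
  have hne : f 0 ≠ f 1 := fun h => by
    have := f.injective h; exact absurd this (by decide)
  rcases hpart (f 0) with ⟨h0, -, -⟩ | ⟨h0, -, -⟩ | ⟨h0, -, -⟩ <;>
  rcases hpart (f 1) with ⟨h1, -, -⟩ | ⟨h1, -, -⟩ | ⟨h1, -, -⟩ <;>
  rcases hpart (f 2) with ⟨h2, -, -⟩ | ⟨h2, -, -⟩ | ⟨h2, -, -⟩ <;>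
  rcases hpart (f 3) with ⟨h3, -, -⟩ | ⟨h3, -, -⟩ | ⟨h3, -, -⟩ <;>
  first
  | exact hA _ h0 _ h2 ha02
  | exact hA _ h0 _ h3 ha03
  | exact hA _ h1 _ h2 ha12
  | exact hA _ h1 _ h3 ha13
  | exact hA _ h2 _ h3 ha23
  | exact hB _ h0 _ h2 ha02
  | exact hB _ h0 _ h3 ha03
  | exact hB _ h1 _ h2 ha12
  | exact hB _ h1 _ h3 ha13
  | exact hB _ h2 _ h3 ha23
  | exact hC _ h0 _ h2 ha02
  | exact hC _ h0 _ h3 ha03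
  | exact hC _ h1 _ h2 ha12
  | exact hC _ h1 _ h3 ha13
  | exact hC _ h2 _ h3 ha23
  | exact hne ((hBA (f 2) h2).unique ⟨h0, ha02.symm⟩ ⟨h1, ha12.symm⟩)
  | exact hne ((hBA (f 3) h3).unique ⟨h0, ha03.symm⟩ ⟨h1, ha13.symm⟩)
  | exact hne ((hBC (f 2) h2).unique ⟨h0, ha02.symm⟩ ⟨h1, ha12.symm⟩)
  | exact hne ((hBC (f 3) h3).unique ⟨h0, ha03.symm⟩ ⟨h1, ha13.symm⟩)
  | -- x0, x1 ∈ B, x2 ∈ A, x3 ∈ C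
    exact hne (key _ h0 _ h1 _ h2 _ h3 ha02 ha03 ha12 ha13)
  | -- x0, x1 ∈ B, x3 ∈ A, x2 ∈ C
    exact hne (key _ h0 _ h1 _ h3 _ h2 ha03 ha02 ha13 ha12)
end

section
/- Let G' be a graph whose vertex set is partitioned into three sets A, B, C such that: A and C are independent sets that are complete to each other; B is an independent set; every vertex of B has exactly one neighbour in A and exactly one neighbour in C; and no two vertices of B have the same neighbourhood. Then G' contains no induced subgraph isomorphic to P_2 + P_4 (the disjoint union of an edge and a path on four vertices). -/
/-- `P₂ + P₄`: the edge `{0,1}` and the path `2-3-4-5`. -/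
def p2PlusP4 : SimpleGraph (Fin 6) :=
  SimpleGraph.fromRel (fun a b =>
    (a = 0 ∧ b = 1) ∨ (a = 2 ∧ b = 3) ∨ (a = 3 ∧ b = 4) ∨ (a = 4 ∧ b = 5))

/-- A path `x2-x3-x4-x5` with all vertices in `A ∪ B`, both independent,
where every vertex of `B` has a unique neighbour in `A`, is impossible. -/
lemma key {V : Type*} (G' : SimpleGraph V) (A B : Set V)
    (hA : ∀ a ∈ A, ∀ a' ∈ A, ¬ G'.Adj a a')
    (hB : ∀ b ∈ B, ∀ b' ∈ B, ¬ G'.Adj b b')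
    (hBA : ∀ b ∈ B, ∃! a, a ∈ A ∧ G'.Adj b a)
    {x2 x3 x4 x5 : V}
    (h2 : x2 ∈ A ∨ x2 ∈ B) (h3 : x3 ∈ A ∨ x3 ∈ B)
    (h4 : x4 ∈ A ∨ x4 ∈ B) (h5 : x5 ∈ A ∨ x5 ∈ B)
    (e23 : G'.Adj x2 x3) (e34 : G'.Adj x3 x4) (e45 : G'.Adj x4 x5)
    (n24 : x2 ≠ x4) (n35 : x3 ≠ x5) : False := by
  rcases h3 with h3 | h3
  · have h2B : x2 ∈ B := h2.resolve_left (fun h => hA _ h _ h3 e23)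
    have h4B : x4 ∈ B := h4.resolve_left (fun h => hA _ h3 _ h e34)
    have h5A : x5 ∈ A := h5.resolve_right (fun h => hB _ h4B _ h e45)
    obtain ⟨a, -, ha⟩ := hBA _ h4B
    exact n35 ((ha x3 ⟨h3, e34.symm⟩).trans (ha x5 ⟨h5A, e45⟩).symm)
  · have h2A : x2 ∈ A := h2.resolve_right (fun h => hB _ h _ h3 e23)
    have h4A : x4 ∈ A := h4.resolve_right (fun h => hB _ h3 _ h e34)
    obtain ⟨a, -, ha⟩ := hBA _ h3
    exact n24 ((ha x2 ⟨h2A, e23.symm⟩).trans (ha x4 ⟨h4A, e34⟩).symm)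

theorem stmt15 {V : Type*} [Fintype V] (G' : SimpleGraph V) (A B C : Set V)
    (hpart : ∀ x : V, (x ∈ A ∧ x ∉ B ∧ x ∉ C) ∨ (x ∈ B ∧ x ∉ A ∧ x ∉ C) ∨
      (x ∈ C ∧ x ∉ A ∧ x ∉ B))
    (hA : ∀ a ∈ A, ∀ a' ∈ A, ¬ G'.Adj a a')
    (hB : ∀ b ∈ B, ∀ b' ∈ B, ¬ G'.Adj b b')
    (hC : ∀ c ∈ C, ∀ c' ∈ C, ¬ G'.Adj c c')
    (hAC : ∀ a ∈ A, ∀ c ∈ C, G'.Adj a c)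
    (hBA : ∀ b ∈ B, ∃! a, a ∈ A ∧ G'.Adj b a)
    (hBC : ∀ b ∈ B, ∃! c, c ∈ C ∧ G'.Adj b c)
    (hnbhd : ∀ b ∈ B, ∀ b' ∈ B, (∀ x : V, G'.Adj b x ↔ G'.Adj b' x) → b = b') :
    ¬ HasInducedCopy p2PlusP4 G' := by
  rintro ⟨f, hf⟩
  have P2adj : ∀ i j : Fin 6, p2PlusP4.Adj i j ↔ (i ≠ j ∧
      ((i = 0 ∧ j = 1) ∨ (i = 2 ∧ j = 3) ∨ (i = 3 ∧ j = 4) ∨ (i = 4 ∧ j = 5) ∨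
       (j = 0 ∧ i = 1) ∨ (j = 2 ∧ i = 3) ∨ (j = 3 ∧ i = 4) ∨ (j = 4 ∧ i = 5))) := by
    simp only [p2PlusP4, SimpleGraph.fromRel_adj]
    decide
  have adj : ∀ i j : Fin 6, p2PlusP4.Adj i j → G'.Adj (f i) (f j) :=
    fun i j h => (hf i j).2 h
  have nadj : ∀ i j : Fin 6, ¬ p2PlusP4.Adj i j → ¬ G'.Adj (f i) (f j) :=
    fun i j h h' => h ((hf i j).1 h')
  have e01 : G'.Adj (f 0) (f 1) := adj 0 1 (by rw [P2adj]; decide)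
  have e23 : G'.Adj (f 2) (f 3) := adj 2 3 (by rw [P2adj]; decide)
  have e34 : G'.Adj (f 3) (f 4) := adj 3 4 (by rw [P2adj]; decide)
  have e45 : G'.Adj (f 4) (f 5) := adj 4 5 (by rw [P2adj]; decide)
  have n02 : ¬ G'.Adj (f 0) (f 2) := nadj 0 2 (by rw [P2adj]; decide)
  have n03 : ¬ G'.Adj (f 0) (f 3) := nadj 0 3 (by rw [P2adj]; decide)
  have n04 : ¬ G'.Adj (f 0) (f 4) := nadj 0 4 (by rw [P2adj]; decide)
  have n05 : ¬ G'.Adj (f 0) (f 5) := nadj 0 5 (by rw [P2adj]; decide)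
  have n12 : ¬ G'.Adj (f 1) (f 2) := nadj 1 2 (by rw [P2adj]; decide)
  have n13 : ¬ G'.Adj (f 1) (f 3) := nadj 1 3 (by rw [P2adj]; decide)
  have n14 : ¬ G'.Adj (f 1) (f 4) := nadj 1 4 (by rw [P2adj]; decide)
  have n15 : ¬ G'.Adj (f 1) (f 5) := nadj 1 5 (by rw [P2adj]; decide)
  have d24 : f 2 ≠ f 4 := fun h => (by decide : (2 : Fin 6) ≠ 4) (f.injective h)
  have d35 : f 3 ≠ f 5 := fun h => (by decide : (3 : Fin 6) ≠ 5) (f.injective h)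
  have notC : ∀ x, x ∉ C → x ∈ A ∨ x ∈ B := by
    intro x hx; rcases hpart x with ⟨h, -, -⟩ | ⟨h, -, -⟩ | ⟨h, -, -⟩ <;> tauto
  have notA : ∀ x, x ∉ A → x ∈ C ∨ x ∈ B := by
    intro x hx; rcases hpart x with ⟨h, -, -⟩ | ⟨h, -, -⟩ | ⟨h, -, -⟩ <;> tauto
  -- case: an endpoint of the edge lies in A
  have caseA : ∀ u, u ∈ A → ¬ G'.Adj u (f 2) → ¬ G'.Adj u (f 3) →
      ¬ G'.Adj u (f 4) → ¬ G'.Adj u (f 5) → False := by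
    intro u hu m2 m3 m4 m5
    have g2 := notC (f 2) (fun h => m2 (hAC u hu _ h))
    have g3 := notC (f 3) (fun h => m3 (hAC u hu _ h))
    have g4 := notC (f 4) (fun h => m4 (hAC u hu _ h))
    have g5 := notC (f 5) (fun h => m5 (hAC u hu _ h))
    exact key G' A B hA hB hBA g2 g3 g4 g5 e23 e34 e45 d24 d35
  -- case: an endpoint of the edge lies in C
  have caseC : ∀ u, u ∈ C → ¬ G'.Adj u (f 2) → ¬ G'.Adj u (f 3) →
      ¬ G'.Adj u (f 4) → ¬ G'.Adj u (f 5) → False := by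
    intro u hu m2 m3 m4 m5
    have g2 := notA (f 2) (fun h => m2 (hAC _ h u hu).symm)
    have g3 := notA (f 3) (fun h => m3 (hAC _ h u hu).symm)
    have g4 := notA (f 4) (fun h => m4 (hAC _ h u hu).symm)
    have g5 := notA (f 5) (fun h => m5 (hAC _ h u hu).symm)
    exact key G' C B hC hB hBC g2 g3 g4 g5 e23 e34 e45 d24 d35
  rcases hpart (f 0) with ⟨h0, -, -⟩ | ⟨h0, -, -⟩ | ⟨h0, -, -⟩
  · exact caseA _ h0 n02 n03 n04 n05
  · rcases hpart (f 1) with ⟨h1, -, -⟩ | ⟨h1, -, -⟩ | ⟨h1, -, -⟩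
    · exact caseA _ h1 n12 n13 n14 n15
    · exact hB _ h0 _ h1 e01
    · exact caseC _ h1 n12 n13 n14 n15
  · exact caseC _ h0 n02 n03 n04 n05
end

section
/- Let G_1 and G_2 be finite simple graphs with minimum degree at least 3, and let G_1' and G_2' be obtained from G_1 and G_2 respectively by subdividing every edge exactly once. Then G_1' is isomorphic to G_2' if and only if G_1 is isomorphic to G_2. -/
/-- The graph obtained from `G` by subdividing every edge exactly once: its vertices are the
original vertices (`Sum.inl`) together with one new vertex per edge (`Sum.inr`), and each new
vertex is adjacent exactly to the two endpoints of its edge. -/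
def subdivision {V : Type*} (G : SimpleGraph V) : SimpleGraph (V ⊕ G.edgeSet) :=
  SimpleGraph.fromRel (fun x y =>
    ∃ (u : V) (e : G.edgeSet), x = Sum.inl u ∧ y = Sum.inr e ∧ u ∈ (e : Sym2 V))

lemma subdiv_adj {V : Type*} (G : SimpleGraph V) (x y : V ⊕ G.edgeSet) :
    (subdivision G).Adj x y ↔ ∃ (u : V) (e : G.edgeSet), u ∈ (e : Sym2 V) ∧
      ((x = Sum.inl u ∧ y = Sum.inr e) ∨ (x = Sum.inr e ∧ y = Sum.inl u)) := by
  rw [subdivision, SimpleGraph.fromRel_adj]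
  constructor
  · rintro ⟨-, (⟨u, e, h1, h2, h3⟩ | ⟨u, e, h1, h2, h3⟩)⟩
    · exact ⟨u, e, h3, Or.inl ⟨h1, h2⟩⟩
    · exact ⟨u, e, h3, Or.inr ⟨h2, h1⟩⟩
  · rintro ⟨u, e, h3, (⟨h1, h2⟩ | ⟨h1, h2⟩)⟩
    · exact ⟨by simp [h1, h2], Or.inl ⟨u, e, h1, h2, h3⟩⟩
    · exact ⟨by simp [h1, h2], Or.inr ⟨u, e, h2, h1, h3⟩⟩

lemma subdiv_adj_inl_inr {V : Type*} (G : SimpleGraph V) (u : V) (e : G.edgeSet) :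
    (subdivision G).Adj (Sum.inl u) (Sum.inr e) ↔ u ∈ (e : Sym2 V) := by
  rw [subdiv_adj]
  constructor
  · rintro ⟨u', e', h3, (⟨h1, h2⟩ | ⟨h1, h2⟩)⟩ <;> simp_all
  · intro h; exact ⟨u, e, h, Or.inl ⟨rfl, rfl⟩⟩

lemma subdiv_adj_inl {V : Type*} (G : SimpleGraph V) (u : V) (w : V ⊕ G.edgeSet)
    (h : (subdivision G).Adj (Sum.inl u) w) :
    ∃ e : G.edgeSet, w = Sum.inr e ∧ u ∈ (e : Sym2 V) := by
  rw [subdiv_adj] at h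
  obtain ⟨u', e', h3, (⟨h1, h2⟩ | ⟨h1, h2⟩)⟩ := h
  · exact ⟨e', h2, by simp_all⟩
  · simp_all

/-- Adjacency in `G` characterized in the subdivision. -/
lemma adj_iff_subdiv {V : Type*} (G : SimpleGraph V) (u v : V) :
    G.Adj u v ↔ (Sum.inl u : V ⊕ G.edgeSet) ≠ Sum.inl v ∧
      ∃ w, (subdivision G).Adj (Sum.inl u) w ∧ (subdivision G).Adj (Sum.inl v) w := by
  constructor
  · intro h
    refine ⟨by simp [h.ne], Sum.inr ⟨s(u, v), h⟩, ?_, ?_⟩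
    · rw [subdiv_adj_inl_inr]; simp
    · rw [subdiv_adj_inl_inr]; simp
  · rintro ⟨hne, w, h1, h2⟩
    have huv : u ≠ v := fun h => hne (by rw [h])
    obtain ⟨e, rfl, hu⟩ := subdiv_adj_inl G u w h1
    obtain ⟨e', he, hv⟩ := subdiv_adj_inl G v _ h2
    have hee : e = e' := by simpa using he
    subst hee
    have hseq : (e : Sym2 V) = s(u, v) := (Sym2.mem_and_mem_iff huv).mp ⟨hu, hv⟩
    have hmem := e.2
    rw [hseq] at hmem
    exact G.mem_edgeSet.mp hmem

/-- Has three pairwise distinct neighbors. -/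
def HasThree {V : Type*} (G : SimpleGraph V) (x : V) : Prop :=
  ∃ a b c, a ≠ b ∧ a ≠ c ∧ b ≠ c ∧ G.Adj x a ∧ G.Adj x b ∧ G.Adj x c

lemma hasThree_map {V V' : Type*} {G : SimpleGraph V} {G' : SimpleGraph V'} (f : G ≃g G')
    (x : V) (h : HasThree G x) : HasThree G' (f x) := by
  obtain ⟨a, b, c, hab, hac, hbc, h1, h2, h3⟩ := h
  exact ⟨f a, f b, f c, fun h => hab (f.injective h), fun h => hac (f.injective h),
    fun h => hbc (f.injective h), f.map_adj_iff.mpr h1, f.map_adj_iff.mpr h2,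
    f.map_adj_iff.mpr h3⟩

lemma hasThree_inl {V : Type*} [Fintype V] (G : SimpleGraph V) [DecidableRel G.Adj]
    (u : V) (h : 3 ≤ G.degree u) : HasThree (subdivision G) (Sum.inl u) := by
  classical
  have h0 : 0 < (G.neighborFinset u).card := by
    have := h; unfold SimpleGraph.degree at this; omega
  obtain ⟨a, ha⟩ := Finset.card_pos.mp h0
  have hd : 3 ≤ (G.neighborFinset u).card := h
  have h1 : 0 < ((G.neighborFinset u).erase a).card := by
    rw [Finset.card_erase_of_mem ha]; omega
  obtain ⟨b, hb⟩ := Finset.card_pos.mp h1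
  have h2 : 0 < (((G.neighborFinset u).erase a).erase b).card := by
    rw [Finset.card_erase_of_mem hb, Finset.card_erase_of_mem ha]; omega
  obtain ⟨c, hc⟩ := Finset.card_pos.mp h2
  have hba : b ≠ a := Finset.ne_of_mem_erase hb
  have hcb : c ≠ b := Finset.ne_of_mem_erase hc
  have hca : c ≠ a := Finset.ne_of_mem_erase (Finset.mem_of_mem_erase hc)
  have hau : G.Adj u a := by simpa using ha
  have hbu : G.Adj u b := by simpa using Finset.mem_of_mem_erase hb
  have hcu : G.Adj u c := by
    simpa using Finset.mem_of_mem_erase (Finset.mem_of_mem_erase hc)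
  refine ⟨Sum.inr ⟨s(u, a), hau⟩, Sum.inr ⟨s(u, b), hbu⟩, Sum.inr ⟨s(u, c), hcu⟩,
    ?_, ?_, ?_, ?_, ?_, ?_⟩
  · simp only [ne_eq, Sum.inr.injEq, Subtype.mk.injEq, Sym2.congr_right]
    exact fun h => hba (Sym2.congr_right.mp (congrArg Subtype.val h).symm)
  · simp only [ne_eq, Sum.inr.injEq, Subtype.mk.injEq, Sym2.congr_right]
    exact fun h => hca (Sym2.congr_right.mp (congrArg Subtype.val h).symm)
  · simp only [ne_eq, Sum.inr.injEq, Subtype.mk.injEq, Sym2.congr_right]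
    exact fun h => hcb (Sym2.congr_right.mp (congrArg Subtype.val h).symm)
  all_goals rw [subdiv_adj_inl_inr]; simp

lemma not_hasThree_inr {V : Type*} (G : SimpleGraph V) (e : G.edgeSet) :
    ¬ HasThree (subdivision G) (Sum.inr e) := by
  rintro ⟨a, b, c, hab, hac, hbc, h1, h2, h3⟩
  induction' he : (e : Sym2 V) using Sym2.ind with x y
  have key : ∀ w, (subdivision G).Adj (Sum.inr e) w → w = Sum.inl x ∨ w = Sum.inl y := by
    intro w hw
    rw [subdiv_adj] at hw
    obtain ⟨u', e', h3', (⟨hh1, hh2⟩ | ⟨hh1, hh2⟩)⟩ := hw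
    · simp_all
    · have hee : e' = e := by simpa using hh1.symm
      subst hee
      rw [he, Sym2.mem_iff] at h3'
      rcases h3' with rfl | rfl
      · exact Or.inl hh2
      · exact Or.inr hh2
  rcases key a h1 with rfl | rfl <;> rcases key b h2 with rfl | rfl <;>
    rcases key c h3 with rfl | rfl <;> simp_all

/-- An iso of subdivisions maps original vertices to original vertices. -/
lemma iso_inl {V₁ V₂ : Type*} [Fintype V₁] (G₁ : SimpleGraph V₁) (G₂ : SimpleGraph V₂)
    [DecidableRel G₁.Adj] (h₁ : ∀ v : V₁, 3 ≤ G₁.degree v)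
    (f : subdivision G₁ ≃g subdivision G₂) (u : V₁) :
    ∃ u', f (Sum.inl u) = Sum.inl u' := by
  have h3 := hasThree_map f _ (hasThree_inl G₁ u (h₁ u))
  cases hfu : f (Sum.inl u) with
  | inl u' => exact ⟨u', rfl⟩
  | inr e => rw [hfu] at h3; exact absurd h3 (not_hasThree_inr G₂ e)

theorem stmt17 {V₁ V₂ : Type*} [Fintype V₁] [Fintype V₂]
    (G₁ : SimpleGraph V₁) (G₂ : SimpleGraph V₂)
    [DecidableRel G₁.Adj] [DecidableRel G₂.Adj]
    (h₁ : ∀ v : V₁, 3 ≤ G₁.degree v) (h₂ : ∀ v : V₂, 3 ≤ G₂.degree v) :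
    Nonempty (subdivision G₁ ≃g subdivision G₂) ↔ Nonempty (G₁ ≃g G₂) := by
  constructor
  · rintro ⟨f⟩
    choose φ hφ using iso_inl G₁ G₂ h₁ f
    choose ψ hψ using iso_inl G₂ G₁ h₂ f.symm
    have hψφ : ∀ u, ψ (φ u) = u := by
      intro u
      have hs : f.symm (Sum.inl (φ u)) = Sum.inl u := by rw [← hφ]; simp
      have h2 := hψ (φ u)
      rw [hs] at h2
      exact (Sum.inl.injEq _ _).mp h2.symm
    have hφψ : ∀ u, φ (ψ u) = u := by
      intro u
      have hs : f (Sum.inl (ψ u)) = Sum.inl u := by rw [← hψ]; simp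
      have h2 := hφ (ψ u)
      rw [hs] at h2
      exact (Sum.inl.injEq _ _).mp h2.symm
    refine ⟨⟨⟨φ, ψ, hψφ, hφψ⟩, ?_⟩⟩
    intro u v
    simp only [Equiv.coe_fn_mk]
    rw [adj_iff_subdiv G₂, adj_iff_subdiv G₁, ← hφ, ← hφ]
    symm
    constructor
    · rintro ⟨hne, w, hw1, hw2⟩
      refine ⟨fun h => hne (f.injective h), f w, ?_, ?_⟩ <;> rwa [f.map_adj_iff]
    · rintro ⟨hne, w, hw1, hw2⟩
      refine ⟨fun h => hne (congrArg f h), f.symm w, ?_, ?_⟩ <;>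
        · rw [← f.map_adj_iff]; simpa
  · rintro ⟨e⟩
    refine ⟨⟨Equiv.sumCongr e.toEquiv e.mapEdgeSet, ?_⟩⟩
    intro x y
    simp only [Equiv.sumCongr_apply]
    rw [subdiv_adj, subdiv_adj]
    symm
    constructor
    · rintro ⟨u, ε, hm, (⟨rfl, rfl⟩ | ⟨rfl, rfl⟩)⟩
      · refine ⟨e u, e.mapEdgeSet ε, ?_, Or.inl ⟨rfl, rfl⟩⟩
        simp only [SimpleGraph.Iso.mapEdgeSet_apply, SimpleGraph.Hom.mapEdgeSet_coe]
        exact Sym2.mem_map.mpr ⟨u, hm, rfl⟩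
      · refine ⟨e u, e.mapEdgeSet ε, ?_, Or.inr ⟨rfl, rfl⟩⟩
        simp only [SimpleGraph.Iso.mapEdgeSet_apply, SimpleGraph.Hom.mapEdgeSet_coe]
        exact Sym2.mem_map.mpr ⟨u, hm, rfl⟩
    · rintro ⟨u, ε, hm, (⟨h1, h2⟩ | ⟨h1, h2⟩)⟩
      · obtain ⟨x', rfl⟩ : ∃ x', x = Sum.inl x' := by
          cases x with
          | inl x' => exact ⟨x', rfl⟩
          | inr => simp at h1
        obtain ⟨y', rfl⟩ : ∃ y', y = Sum.inr y' := by
          cases y with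
          | inl => simp at h2
          | inr y' => exact ⟨y', rfl⟩
        refine ⟨x', y', ?_, Or.inl ⟨rfl, rfl⟩⟩
        have hx : e x' = u := by simpa using h1
        have hy : e.mapEdgeSet y' = ε := by simpa using h2
        subst hx; subst hy
        simp only [SimpleGraph.Iso.mapEdgeSet_apply, SimpleGraph.Hom.mapEdgeSet_coe] at hm
        obtain ⟨a, ha, hae⟩ := Sym2.mem_map.mp hm
        rwa [← e.injective hae]
      · obtain ⟨x', rfl⟩ : ∃ x', x = Sum.inr x' := by
          cases x with
          | inl => simp at h1
          | inr x' => exact ⟨x', rfl⟩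
        obtain ⟨y', rfl⟩ : ∃ y', y = Sum.inl y' := by
          cases y with
          | inl y' => exact ⟨y', rfl⟩
          | inr => simp at h2
        refine ⟨y', x', ?_, Or.inr ⟨rfl, rfl⟩⟩
        have hx : e.mapEdgeSet x' = ε := by simpa using h1
        have hy : e y' = u := by simpa using h2
        subst hx; subst hy
        simp only [SimpleGraph.Iso.mapEdgeSet_apply, SimpleGraph.Hom.mapEdgeSet_coe] at hm
        obtain ⟨a, ha, hae⟩ := Sym2.mem_map.mp hm
        rwa [← e.injective hae]
end

section
/- Let s ≥ 0 and t ≥ 0 be integers. Every finite simple graph that contains no induced subgraph isomorphic to the complement of sP_1 + P_2 and no induced subgraph isomorphic to tP_1 + P_2 must satisfy at least one of: (a) it contains no clique on s+1 vertices, or (b) it contains no independent set on s^2(t-1)+2 vertices. -/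
/-- `sP₁ + P₂`: `s` isolated vertices together with the single edge `{0,1}`. -/
def sP1PlusP2 (s : ℕ) : SimpleGraph (Fin (s + 2)) :=
  SimpleGraph.fromRel (fun a b => a = 0 ∧ b = 1)

/-- The complement of `sP₁ + P₂`: all pairs of distinct vertices adjacent except `{0,1}`. -/
def coSP1PlusP2 (s : ℕ) : SimpleGraph (Fin (s + 2)) :=
  SimpleGraph.fromRel (fun a b => ¬(a = 0 ∧ b = 1) ∧ ¬(a = 1 ∧ b = 0))


lemma exists_emb {V : Type*} (k : ℕ) (x y : V) (C : Finset V) (hC : C.card = k)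
    (hx : x ∉ C) (hy : y ∉ C) (hxy : x ≠ y) :
    ∃ f : Fin (k + 2) ↪ V, f 0 = x ∧ f 1 = y ∧
      ∀ a : Fin (k + 2), a ≠ 0 → a ≠ 1 → f a ∈ C := by
  classical
  let e := C.equivFinOfCardEq hC
  set g : Fin (k + 2) → V := fun a =>
    if h : (a : ℕ) = 0 then x else if h' : (a : ℕ) = 1 then y
    else (e.symm ⟨(a : ℕ) - 2, by omega⟩ : V) with hg
  have gx : ∀ c : Fin (k+2), (c:ℕ) = 0 → g c = x := fun c h => by simp only [hg]; rw [dif_pos h]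
  have gy : ∀ c : Fin (k+2), (c:ℕ) = 1 → g c = y := fun c h => by
    simp only [hg]; rw [dif_neg (show ¬ (c:ℕ) = 0 by omega), dif_pos h]
  have hmemC : ∀ (a : Fin (k+2)), (a:ℕ) ≠ 0 → (a:ℕ) ≠ 1 → g a ∈ C := by
    intro a h h'
    simp only [hg, dif_neg h, dif_neg h']
    exact (e.symm _).2
  have hginj : Function.Injective g := by
    intro a b hab
    rcases Nat.lt_or_ge (a:ℕ) 2 with ha | ha <;> rcases Nat.lt_or_ge (b:ℕ) 2 with hb | hb
    · have ha' : (a:ℕ) = 0 ∨ (a:ℕ) = 1 := by omega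
      have hb' : (b:ℕ) = 0 ∨ (b:ℕ) = 1 := by omega
      rcases ha' with h1 | h1 <;> rcases hb' with h2 | h2
      · exact Fin.ext (by omega)
      · rw [gx a h1, gy b h2] at hab; exact absurd hab hxy
      · rw [gy a h1, gx b h2] at hab; exact absurd hab.symm hxy
      · exact Fin.ext (by omega)
    · exfalso
      have hbC := hmemC b (by omega) (by omega)
      rcases (by omega : (a:ℕ) = 0 ∨ (a:ℕ) = 1) with h1 | h1
      · rw [gx a h1] at hab; exact hx (hab ▸ hbC)
      · rw [gy a h1] at hab; exact hy (hab ▸ hbC)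
    · exfalso
      have haC := hmemC a (by omega) (by omega)
      rcases (by omega : (b:ℕ) = 0 ∨ (b:ℕ) = 1) with h1 | h1
      · rw [gx b h1] at hab; exact hx (hab ▸ haC)
      · rw [gy b h1] at hab; exact hy (hab ▸ haC)
    · simp only [hg] at hab
      rw [dif_neg (by omega : ¬(a:ℕ)=0), dif_neg (by omega : ¬(a:ℕ)=1),
        dif_neg (by omega : ¬(b:ℕ)=0), dif_neg (by omega : ¬(b:ℕ)=1)] at hab
      have h2 := congrArg Fin.val (e.symm.injective (Subtype.ext hab))
      simp only at h2
      exact Fin.ext (by omega)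
  refine ⟨⟨g, hginj⟩, gx 0 rfl, gy 1 (by simp), ?_⟩
  intro a h0 h1
  exact hmemC a (fun h => h0 (Fin.ext (by simpa using h))) (fun h => h1 (Fin.ext (by simpa using h)))

lemma copy_tP {V : Type*} (t : ℕ) (G : SimpleGraph V) (u v : V) (huv : G.Adj u v)
    (S : Finset V) (hS : S.card = t) (hu : u ∉ S) (hv : v ∉ S)
    (hind : ∀ a ∈ S, ∀ b ∈ S, a ≠ b → ¬ G.Adj a b)
    (hSu : ∀ a ∈ S, ¬ G.Adj a u) (hSv : ∀ a ∈ S, ¬ G.Adj a v) :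
    HasInducedCopy (sP1PlusP2 t) G := by
  obtain ⟨f, h0, h1, hmem⟩ := exists_emb t u v S hS hu hv huv.ne
  refine ⟨f, fun a b => ?_⟩
  have hrhs : (sP1PlusP2 t).Adj a b ↔ a ≠ b ∧ ((a = 0 ∧ b = 1) ∨ (b = 0 ∧ a = 1)) := by
    rw [sP1PlusP2, SimpleGraph.fromRel_adj]
  rw [hrhs]
  constructor
  · intro hadj
    have hne : a ≠ b := fun h => G.loopless.irrefl _ (h ▸ hadj)
    refine ⟨hne, ?_⟩
    by_cases ha0 : a = 0
    · by_cases hb1 : b = 1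
      · exact Or.inl ⟨ha0, hb1⟩
      · exfalso
        have hb0 : b ≠ 0 := fun h => hne (ha0.trans h.symm)
        have hbS := hmem b hb0 hb1
        rw [ha0, h0] at hadj
        exact hSu (f b) hbS hadj.symm
    · by_cases ha1 : a = 1
      · by_cases hb0 : b = 0
        · exact Or.inr ⟨hb0, ha1⟩
        · exfalso
          have hb1 : b ≠ 1 := fun h => hne (ha1.trans h.symm)
          have hbS := hmem b hb0 hb1
          rw [ha1, h1] at hadj
          exact hSv (f b) hbS hadj.symm
      · exfalso
        have haS := hmem a ha0 ha1
        by_cases hb0 : b = 0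
        · rw [hb0, h0] at hadj; exact hSu (f a) haS hadj
        · by_cases hb1 : b = 1
          · rw [hb1, h1] at hadj; exact hSv (f a) haS hadj
          · exact hind (f a) haS (f b) (hmem b hb0 hb1) (f.injective.ne hne) hadj
  · rintro ⟨hne, (⟨ha, hb⟩ | ⟨hb, ha⟩)⟩
    · rw [ha, hb, h0, h1]; exact huv
    · rw [ha, hb, h0, h1]; exact huv.symm

lemma copy_co {V : Type*} (s : ℕ) (G : SimpleGraph V) (x y : V) (hxy : x ≠ y)
    (hnadj : ¬ G.Adj x y)
    (C : Finset V) (hC : C.card = s) (hx : x ∉ C) (hy : y ∉ C)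
    (hclique : ∀ a ∈ C, ∀ b ∈ C, a ≠ b → G.Adj a b)
    (hCx : ∀ a ∈ C, G.Adj a x) (hCy : ∀ a ∈ C, G.Adj a y) :
    HasInducedCopy (coSP1PlusP2 s) G := by
  obtain ⟨f, h0, h1, hmem⟩ := exists_emb s x y C hC hx hy hxy
  refine ⟨f, fun a b => ?_⟩
  have hrhs : (coSP1PlusP2 s).Adj a b ↔ a ≠ b ∧ (¬(a = 0 ∧ b = 1) ∧ ¬(a = 1 ∧ b = 0)) := by
    rw [coSP1PlusP2, SimpleGraph.fromRel_adj]; tauto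
  rw [hrhs]
  constructor
  · intro hadj
    have hne : a ≠ b := fun h => G.loopless.irrefl _ (h ▸ hadj)
    refine ⟨hne, fun ⟨ha, hb⟩ => ?_, fun ⟨ha, hb⟩ => ?_⟩
    · rw [ha, hb, h0, h1] at hadj; exact hnadj hadj
    · rw [ha, hb, h0, h1] at hadj; exact hnadj hadj.symm
  · rintro ⟨hne, hn1, hn2⟩
    by_cases ha0 : a = 0
    · have hb1 : b ≠ 1 := fun h => hn1 ⟨ha0, h⟩
      have hb0 : b ≠ 0 := fun h => hne (ha0.trans h.symm)
      rw [ha0, h0]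
      exact (hCx (f b) (hmem b hb0 hb1)).symm
    · by_cases ha1 : a = 1
      · have hb0 : b ≠ 0 := fun h => hn2 ⟨ha1, h⟩
        have hb1 : b ≠ 1 := fun h => hne (ha1.trans h.symm)
        rw [ha1, h1]
        exact (hCy (f b) (hmem b hb0 hb1)).symm
      · have haC := hmem a ha0 ha1
        by_cases hb0 : b = 0
        · rw [hb0, h0]; exact hCx (f a) haC
        · by_cases hb1 : b = 1
          · rw [hb1, h1]; exact hCy (f a) haC
          · exact hclique (f a) haC (f b) (hmem b hb0 hb1) (f.injective.ne hne)

lemma lemA {V : Type*} (s t : ℕ) (G : SimpleGraph V)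
    (hco : ¬ HasInducedCopy (coSP1PlusP2 s) G)
    (htp : ¬ HasInducedCopy (sP1PlusP2 t) G)
    (I : Finset V) (hIind : ∀ a ∈ I, ∀ b ∈ I, a ≠ b → ¬ G.Adj a b)
    (c : V) (hcI : c ∈ I) (K' : Finset V) (hK' : K'.card = s)
    (hclq : ∀ a ∈ K', ∀ b ∈ K', a ≠ b → G.Adj a b)
    (hcK : ∀ a ∈ K', G.Adj c a)
    (hIK : ∀ a ∈ I, a ∉ K') :
    I.card ≤ 1 + s * (t - 1) := by
  classical
  have hex : ∀ y ∈ I.erase c, ∃ v ∈ K', ¬ G.Adj y v := by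
    intro y hy
    obtain ⟨hyne, hyI⟩ := Finset.mem_erase.mp hy
    by_contra hcon; push_neg at hcon
    exact hco (copy_co s G y c hyne (hIind y hyI c hcI hyne) K' hK' (hIK y hyI) (hIK c hcI)
      hclq (fun a ha => (hcon a ha).symm) (fun a ha => (hcK a ha).symm))
  set φ : V → V := fun y => if h : ∃ v ∈ K', ¬ G.Adj y v then h.choose else c with hφ
  have hφmem : ∀ y ∈ I.erase c, φ y ∈ K' ∧ ¬ G.Adj y (φ y) := by
    intro y hy
    have h := hex y hy
    simp only [hφ, dif_pos h]
    exact ⟨h.choose_spec.1, h.choose_spec.2⟩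
  have hcard : (I.erase c).card ≤ (t - 1) * ((I.erase c).image φ).card := by
    apply Finset.card_le_mul_card_image
    intro v hv
    by_contra hbig; push_neg at hbig
    obtain ⟨y0, hy0, hvy0⟩ := Finset.mem_image.mp hv
    have hvK : v ∈ K' := hvy0 ▸ (hφmem y0 hy0).1
    have hcv : G.Adj c v := hcK v hvK
    set F := (I.erase c).filter (fun y => φ y = v) with hF
    have hFy : ∀ y ∈ F, y ∈ I ∧ y ≠ c ∧ ¬ G.Adj y v := by
      intro y hyF
      obtain ⟨hy1, hy2⟩ := Finset.mem_filter.mp hyF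
      obtain ⟨hyne, hyI⟩ := Finset.mem_erase.mp hy1
      exact ⟨hyI, hyne, hy2 ▸ (hφmem y hy1).2⟩
    obtain ⟨S, hSsub, hScard⟩ := Finset.exists_subset_card_eq (s := F) (n := t) (by omega)
    apply htp
    refine copy_tP t G c v hcv S hScard ?_ ?_ ?_ ?_ ?_
    · exact fun hcS => (hFy c (hSsub hcS)).2.1 rfl
    · exact fun hvS => hIK v (hFy v (hSsub hvS)).1 hvK
    · exact fun a ha b hb hab => hIind a (hFy a (hSsub ha)).1 b (hFy b (hSsub hb)).1 hab
    · intro a ha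
      have h := hFy a (hSsub ha)
      exact fun hadj => hIind a h.1 c hcI h.2.1 hadj
    · exact fun a ha => (hFy a (hSsub ha)).2.2
  have himg : ((I.erase c).image φ).card ≤ s := by
    rw [← hK']
    apply Finset.card_le_card
    intro v hv
    obtain ⟨y0, hy0, hvy0⟩ := Finset.mem_image.mp hv
    exact hvy0 ▸ (hφmem y0 hy0).1
  have h1 : (I.erase c).card + 1 = I.card := Finset.card_erase_add_one hcI
  have := Nat.mul_le_mul_left (t - 1) himg
  calc I.card = (I.erase c).card + 1 := h1.symm
    _ ≤ (t - 1) * s + 1 := by omega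
    _ = 1 + s * (t - 1) := by ring

theorem stmt18 {V : Type*} [Fintype V] (s t : ℕ) (G : SimpleGraph V)
    (hco : ¬ HasInducedCopy (coSP1PlusP2 s) G)
    (htp : ¬ HasInducedCopy (sP1PlusP2 t) G) :
    (∀ K : Finset V, (∀ a ∈ K, ∀ b ∈ K, a ≠ b → G.Adj a b) → K.card ≤ s) ∨
    (∀ I : Finset V, (∀ a ∈ I, ∀ b ∈ I, a ≠ b → ¬ G.Adj a b) →
      I.card ≤ s ^ 2 * (t - 1) + 1) := by
  classical
  by_contra hcon
  push_neg at hcon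
  obtain ⟨⟨K0, hK0c, hK0⟩, ⟨I, hIind, hI⟩⟩ := hcon
  -- case s = 0
  rcases Nat.eq_zero_or_pos s with hs0 | hs
  · subst hs0
    have h2 : 1 < I.card := by omega
    obtain ⟨x, hx, y, hy, hxy⟩ := Finset.one_lt_card.mp h2
    exact hco (copy_co 0 G x y hxy (hIind x hx y hy hxy) ∅ rfl (by simp) (by simp)
      (by simp) (by simp) (by simp))
  -- case t = 0
  rcases Nat.eq_zero_or_pos t with ht0 | ht
  · subst ht0
    have h2 : 1 < K0.card := by omega
    obtain ⟨u, hu, v, hv, huv⟩ := Finset.one_lt_card.mp h2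
    exact htp (copy_tP 0 G u v (hK0c u hu v hv huv) ∅ rfl (by simp) (by simp)
      (by simp) (by simp) (by simp))
  -- shrink K0 to K of size s + 1
  obtain ⟨K, hKsub, hKcard⟩ := Finset.exists_subset_card_eq (show s + 1 ≤ K0.card by omega)
  have hKclq : ∀ a ∈ K, ∀ b ∈ K, a ≠ b → G.Adj a b :=
    fun a ha b hb => hK0c a (hKsub ha) b (hKsub hb)
  have hbound : s * (t - 1) ≤ s ^ 2 * (t - 1) :=
    Nat.mul_le_mul_right _ (by nlinarith)
  by_cases hzK : ∃ z ∈ I, z ∈ K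
  · obtain ⟨z, hzI, hzKm⟩ := hzK
    have hK'card : (K.erase z).card = s := by rw [Finset.card_erase_of_mem hzKm, hKcard]; omega
    have h := lemA s t G hco htp I hIind z hzI (K.erase z) hK'card
      (fun a ha b hb => hKclq a (Finset.mem_of_mem_erase ha) b (Finset.mem_of_mem_erase hb))
      (fun a ha => (hKclq a (Finset.mem_of_mem_erase ha) z hzKm
        (Finset.ne_of_mem_erase ha)).symm)
      (fun a haI haK => hIind a haI z hzI (Finset.ne_of_mem_erase haK)
        (hKclq a (Finset.mem_of_mem_erase haK) z hzKm (Finset.ne_of_mem_erase haK)))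
    omega
  · push_neg at hzK
    by_cases hx1 : ∃ x ∈ I, ∃ u ∈ K, ∀ v ∈ K, v ≠ u → G.Adj x v
    · obtain ⟨x, hxI, u, huK, hxadj⟩ := hx1
      have hK'card : (K.erase u).card = s := by rw [Finset.card_erase_of_mem huK, hKcard]; omega
      have h := lemA s t G hco htp I hIind x hxI (K.erase u) hK'card
        (fun a ha b hb => hKclq a (Finset.mem_of_mem_erase ha) b (Finset.mem_of_mem_erase hb))
        (fun a ha => hxadj a (Finset.mem_of_mem_erase ha) (Finset.ne_of_mem_erase ha))
        (fun a haI haK => hzK a haI (Finset.mem_of_mem_erase haK))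
      omega
    · push_neg at hx1
      -- every y in I has at least two non-neighbours in K
      set D : V → Finset V := fun y => K.filter (fun v => ¬ G.Adj y v) with hD
      have hD2 : ∀ y ∈ I, 2 ≤ (D y).card := by
        intro y hy
        have hKne : K.Nonempty := Finset.card_pos.mp (by omega)
        obtain ⟨u0, hu0⟩ := hKne
        obtain ⟨v, hvK, hvu, hvn⟩ := hx1 y hy u0 hu0
        obtain ⟨v', hv'K, hv'v, hv'n⟩ := hx1 y hy v hvK
        exact Finset.one_lt_card.mpr ⟨v', Finset.mem_filter.mpr ⟨hv'K, hv'n⟩,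
          v, Finset.mem_filter.mpr ⟨hvK, hvn⟩, hv'v⟩
      set φ : V → Finset V := fun y =>
        if h : 2 ≤ (D y).card then (Finset.exists_subset_card_eq h).choose else ∅ with hφ
      have hφspec : ∀ y ∈ I, φ y ⊆ D y ∧ (φ y).card = 2 := by
        intro y hy
        have h := hD2 y hy
        simp only [hφ, dif_pos h]
        exact ⟨(Finset.exists_subset_card_eq h).choose_spec.1,
          (Finset.exists_subset_card_eq h).choose_spec.2⟩
      have hcard : I.card ≤ (t - 1) * (I.image φ).card := by
        apply Finset.card_le_mul_card_image
        intro p hp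
        by_contra hbig; push_neg at hbig
        obtain ⟨y0, hy0, hpy0⟩ := Finset.mem_image.mp hp
        have hpspec := hφspec y0 hy0
        have hpcard : p.card = 2 := hpy0 ▸ hpspec.2
        obtain ⟨u, v, huv, hpuv⟩ := Finset.card_eq_two.mp hpcard
        have huD : ∀ y ∈ I, φ y = p → u ∈ D y ∧ v ∈ D y := by
          intro y hy hyp
          have hs := hφspec y hy
          constructor
          · exact hs.1 (hyp ▸ hpuv ▸ Finset.mem_insert_self u {v})
          · exact hs.1 (hyp ▸ hpuv ▸ Finset.mem_insert_of_mem (Finset.mem_singleton_self v))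
        set F := I.filter (fun y => φ y = p) with hF
        have hFy : ∀ y ∈ F, y ∈ I ∧ ¬ G.Adj y u ∧ ¬ G.Adj y v := by
          intro y hyF
          obtain ⟨hy1, hy2⟩ := Finset.mem_filter.mp hyF
          obtain ⟨hu', hv'⟩ := huD y hy1 hy2
          exact ⟨hy1, (Finset.mem_filter.mp hu').2, (Finset.mem_filter.mp hv').2⟩
        have huK : u ∈ K := by
          have := (huD y0 hy0 hpy0).1
          exact (Finset.mem_filter.mp this).1
        have hvK : v ∈ K := by
          have := (huD y0 hy0 hpy0).2
          exact (Finset.mem_filter.mp this).1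
        obtain ⟨S, hSsub, hScard⟩ := Finset.exists_subset_card_eq
          (show t ≤ F.card by omega)
        apply htp
        refine copy_tP t G u v (hKclq u huK v hvK huv) S hScard ?_ ?_ ?_ ?_ ?_
        · exact fun huS => hzK u (hFy u (hSsub huS)).1 huK
        · exact fun hvS => hzK v (hFy v (hSsub hvS)).1 hvK
        · exact fun a ha b hb hab => hIind a (hFy a (hSsub ha)).1 b (hFy b (hSsub hb)).1 hab
        · exact fun a ha => (hFy a (hSsub ha)).2.1
        · exact fun a ha => (hFy a (hSsub ha)).2.2
      have himg : (I.image φ).card ≤ (s + 1).choose 2 := by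
        have hsub : I.image φ ⊆ K.powersetCard 2 := by
          intro p hp
          obtain ⟨y0, hy0, hpy0⟩ := Finset.mem_image.mp hp
          have hs' := hφspec y0 hy0
          refine Finset.mem_powersetCard.mpr ⟨?_, hpy0 ▸ hs'.2⟩
          intro w hw
          have : w ∈ D y0 := hs'.1 (hpy0 ▸ hw)
          exact (Finset.mem_filter.mp this).1
        calc (I.image φ).card ≤ (K.powersetCard 2).card := Finset.card_le_card hsub
          _ = (s + 1).choose 2 := by rw [Finset.card_powersetCard, hKcard]
      have hch : (s + 1).choose 2 ≤ s ^ 2 := by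
        rw [Nat.choose_two_right, Nat.add_sub_cancel]
        have h1 : (s + 1) * s ≤ 2 * s ^ 2 := by nlinarith
        omega
      have : I.card ≤ (t - 1) * s ^ 2 := le_trans hcard
        (Nat.mul_le_mul_left _ (le_trans himg hch))
      have := Nat.mul_comm (t - 1) (s ^ 2)
      omega
end
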